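/- arXiv:2406.19503 — 6 statements merged into one kernel-verified Lean document; each statement's English description precedes it below -/
import Mathlib

section
/- In a directed acyclic graph D, every node u is d-separated from any node v that is neither a descendant of u nor a parent of u by the set pa(u) of parents of u. -/
/-- Adjacency: an edge in either direction. -/
def Adj {V : Type*} (E : V → V → Prop) (u v : V) : Prop := E u v ∨ E v u

/-- A directed graph is acyclic if no node lies on a directed cycle. -/
def Acyclic {V : Type*} (E : V → V → Prop) : Prop := ∀ v, ¬ Relation.TransGen E v v

/-- `Desc E v w` : `w` is a descendant of `v` (including `v` itself). -/
def Desc {V : Type*} (E : V → V → Prop) (v w : V) : Prop := Relation.ReflTransGen E v w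

/-- A path between `u` and `v`: a nonempty list of distinct, consecutively adjacent
nodes starting at `u` and ending at `v`. -/
def IsPath {V : Type*} (E : V → V → Prop) (u v : V) (p : List V) : Prop :=
  p.Nodup ∧ p.Chain' (Adj E) ∧ p.head? = some u ∧ p.getLast? = some v

/-- The node at (interior) position `i` of the path `p` is a collider:
both path edges point into it. -/
def ColliderAt {V : Type*} (E : V → V → Prop) (p : List V) (i : ℕ) : Prop :=
  0 < i ∧ ∃ a w b, p[i-1]? = some a ∧ p[i]? = some w ∧ p[i+1]? = some b ∧ E a w ∧ E b w

/-- A path is blocked by `S` if it contains an interior non-collider in `S`, or a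
collider none of whose descendants (including itself) is in `S`. -/
def Blocked {V : Type*} (E : V → V → Prop) (S : Set V) (p : List V) : Prop :=
  (∃ i w, 0 < i ∧ i + 1 < p.length ∧ p[i]? = some w ∧ ¬ ColliderAt E p i ∧ w ∈ S) ∨
  (∃ i w, ColliderAt E p i ∧ p[i]? = some w ∧ ∀ d, Desc E w d → d ∉ S)

/-- `S` d-separates `u` and `v`: every path between them is blocked by `S`. -/
def DSep {V : Type*} (E : V → V → Prop) (S : Set V) (u v : V) : Prop :=
  ∀ p, IsPath E u v p → Blocked E S p

/-- Every node  is d-separated from any non-descendant, non-parent 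
by the set of parents of . -/
theorem dsep_nonDescendant_by_parents {V : Type*} (E : V → V → Prop) (hD : Acyclic E)
    (u v : V) (hdesc : ¬ Desc E u v) (hpar : ¬ E v u) :
    DSep E {w | E w u} u v := by
  classical
  intro p hp
  obtain ⟨hnd, hch, hhead, hlast⟩ := hp
  have hne : p ≠ [] := by rintro rfl; simp at hhead
  have hnpos : 0 < p.length := List.length_pos_iff.mpr hne
  set g : ℕ → V := fun i => p.getD i u with hgdef
  have hgi : ∀ i, i < p.length → p[i]? = some (g i) := by
    intro i hi
    simp only [hgdef]
    rw [List.getD_eq_getElem p u hi]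
    exact List.getElem?_eq_getElem hi
  have h0 : g 0 = u := by
    rw [List.head?_eq_getElem?, hgi 0 hnpos] at hhead
    exact Option.some_injective _ hhead
  have hlastv : g (p.length - 1) = v := by
    rw [List.getLast?_eq_getElem?, hgi _ (by omega)] at hlast
    exact Option.some_injective _ hlast
  have hadj : ∀ i, i + 1 < p.length → Adj E (g i) (g (i + 1)) := by
    intro i hi
    simp only [hgdef]
    rw [List.getD_eq_getElem p u (show i < p.length by omega), List.getD_eq_getElem p u hi]
    have := List.isChain_iff_getElem.mp hch i (by omega)
    simpa [List.get_eq_getElem] using this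
  have huv : u ≠ v := fun h => hdesc (h ▸ Relation.ReflTransGen.refl)
  have hn2 : 1 < p.length := by
    by_contra h
    have : p.length = 1 := by omega
    apply huv
    rw [← h0, ← hlastv, this]
  by_cases hB : ∃ i, i + 1 < p.length ∧ E (g (i + 1)) (g i)
  · -- there is a backward edge; take the first one
    obtain ⟨k, ⟨hk1, hk2⟩, hmin⟩ :
        ∃ k, (k + 1 < p.length ∧ E (g (k + 1)) (g k)) ∧
          ∀ j, j < k → ¬(j + 1 < p.length ∧ E (g (j + 1)) (g j)) :=
      ⟨Nat.find hB, Nat.find_spec hB, fun j hj => Nat.find_min hB hj⟩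
    have hfw : ∀ j, j < k → E (g j) (g (j + 1)) := by
      intro j hj
      have hjl : j + 1 < p.length := by omega
      rcases hadj j hjl with h | h
      · exact h
      · exact absurd ⟨hjl, h⟩ (hmin j hj)
    have hreach : ∀ i, i ≤ k → Relation.ReflTransGen E u (g i) := by
      intro i hi
      induction i with
      | zero => rw [h0]
      | succ i ih => exact (ih (by omega)).tail (hfw i (by omega))
    rcases Nat.eq_zero_or_pos k with hk0 | hkpos
    · -- backward first edge: g 1 is a parent of u, non-collider
      subst hk0
      have hE1u : E (g 1) u := by rwa [h0] at hk2
      have h2 : 2 < p.length := by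
        by_contra h
        have : p.length = 2 := by omega
        exact hpar (by rwa [show (1:ℕ) = p.length - 1 by omega, hlastv] at hE1u)
      left
      refine ⟨1, g 1, one_pos, h2, hgi 1 (by omega), ?_, hE1u⟩
      rintro ⟨-, a, w, b, ha, hw, hb, haw, hbw⟩
      rw [hgi 0 hnpos] at ha
      rw [hgi 1 (by omega)] at hw
      have ha' : a = g 0 := (Option.some_injective _ ha).symm
      have hw' : w = g 1 := (Option.some_injective _ hw).symm
      subst ha'; subst hw'
      rw [h0] at haw
      exact hD u ((Relation.TransGen.single haw).tail hE1u)
    · -- collider at k with no descendant that is a parent of u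
      right
      have hcol : ColliderAt E p k := by
        refine ⟨hkpos, g (k - 1), g k, g (k + 1), hgi _ (by omega),
          hgi _ (by omega), hgi _ (by omega), ?_, hk2⟩
        have := hfw (k - 1) (by omega)
        rwa [show k - 1 + 1 = k by omega] at this
      refine ⟨k, g k, hcol, hgi _ (by omega), ?_⟩
      intro d hd hdS
      exact hD u (Relation.TransGen.tail' ((hreach k le_rfl).trans hd) hdS)
  · -- no backward edge: v is a descendant of u, contradiction
    exfalso
    apply hdesc
    push_neg at hB
    have hfw : ∀ j, j + 1 < p.length → E (g j) (g (j + 1)) := by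
      intro j hj
      rcases hadj j hj with h | h
      · exact h
      · exact absurd h (hB j hj)
    have hreach : ∀ i, i < p.length → Relation.ReflTransGen E u (g i) := by
      intro i hi
      induction i with
      | zero => rw [h0]
      | succ i ih => exact (ih (by omega)).tail (hfw i hi)
    have := hreach (p.length - 1) (by omega)
    rwa [hlastv] at this
end

section
/- Let D be a DAG and let u, v be distinct non-adjacent nodes of D. Then u and v are d-separated either by the set of parents of u or by the set of parents of v. -/
/-!
If `u` is not an ancestor of `v`, the parents of `u` block every path from `u` to `v`. A path
leaving `u` through a parent `w` is blocked at `w`, which cannot be a collider since `u → w → u`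
would be a cycle. A path leaving `u` along an out-edge cannot stay directed all the way to `v`,
so it meets a collider that is a descendant of `u`; no descendant of that collider is a parent
of `u`, again by acyclicity. By acyclicity one of `u`, `v` is not an ancestor of the other.
-/

section

variable {V : Type*} {E : V → V → Prop}

theorem Adj.symm {u v : V} (h : Adj E u v) : Adj E v u := Or.symm h

theorem Acyclic.not_edge_of_desc (hD : Acyclic E) {u w : V} (h : Desc E u w) : ¬ E w u :=
  fun hwu => hD u (Relation.TransGen.trans_right h (.single hwu))

theorem Acyclic.desc_antisymm (hD : Acyclic E) {u v : V} (huv : Desc E u v) (hvu : Desc E v u) :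
    u = v := by
  rcases huv.cases_tail with rfl | ⟨c, huc, hcv⟩
  · rfl
  · exact absurd hcv (hD.not_edge_of_desc (hvu.trans huc))

theorem colliderAt_cons {p : List V} {i : ℕ} (x : V) (h : ColliderAt E p i) :
    ColliderAt E (x :: p) (i + 1) := by
  obtain ⟨hi, a, w, b, ha, hw, hb, hea, heb⟩ := h
  refine ⟨i.succ_pos, a, w, b, ?_, hw, hb, hea, heb⟩
  obtain ⟨j, rfl⟩ := Nat.exists_eq_add_of_lt hi
  simpa using ha

theorem colliderAt_reverse {p : List V} {i : ℕ} (h : ColliderAt E p i) :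
    ColliderAt E p.reverse (p.length - 1 - i) := by
  obtain ⟨hi, a, w, b, ha, hw, hb, hea, heb⟩ := h
  have hlen : i + 1 < p.length := (List.getElem?_eq_some_iff.mp hb).1
  refine ⟨by omega, b, w, a, ?_, ?_, ?_, heb, hea⟩
  · rwa [List.getElem?_reverse (by omega),
      show p.length - 1 - (p.length - 1 - i - 1) = i + 1 by omega]
  · rwa [List.getElem?_reverse (by omega), show p.length - 1 - (p.length - 1 - i) = i by omega]
  · rwa [List.getElem?_reverse (by omega),
      show p.length - 1 - (p.length - 1 - i + 1) = i - 1 by omega]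

theorem colliderAt_reverse_iff {p : List V} {i : ℕ} (hi : i < p.length) :
    ColliderAt E p.reverse (p.length - 1 - i) ↔ ColliderAt E p i := by
  refine ⟨fun h => ?_, colliderAt_reverse⟩
  simpa [show p.length - 1 - (p.length - 1 - i) = i by omega] using colliderAt_reverse h

theorem Blocked.reverse {S : Set V} {p : List V} (h : Blocked E S p) : Blocked E S p.reverse := by
  rcases h with ⟨i, w, hpos, hlen, hw, hnc, hwS⟩ | ⟨i, w, hc, hw, hd⟩
  · refine .inl ⟨p.length - 1 - i, w, by omega, by simp; omega, ?_,
      (colliderAt_reverse_iff (by omega)).not.mpr hnc, hwS⟩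
    rwa [List.getElem?_reverse (by omega), show p.length - 1 - (p.length - 1 - i) = i by omega]
  · have hlen : i < p.length := (List.getElem?_eq_some_iff.mp hw).1
    refine .inr ⟨p.length - 1 - i, w, colliderAt_reverse hc, ?_, hd⟩
    rwa [List.getElem?_reverse (by omega), show p.length - 1 - (p.length - 1 - i) = i by omega]

theorem IsPath.reverse {u v : V} {p : List V} (hp : IsPath E u v p) : IsPath E v u p.reverse := by
  obtain ⟨hnd, hch, hhd, hlast⟩ := hp
  refine ⟨List.nodup_reverse.mpr hnd, ?_, by rwa [List.head?_reverse],
    by rwa [List.getLast?_reverse]⟩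
  rw [List.Chain', List.isChain_reverse]
  exact (show List.IsChain _ p from hch).imp fun _ _ h => h.symm

theorem dSep_reverse {S : Set V} {u v : V} (h : DSep E S v u) : DSep E S u v := fun p hp => by
  simpa using (h p.reverse hp.reverse).reverse

theorem exists_colliderAt_desc {a b v : V} {l : List V} (hch : (a :: b :: l).IsChain (Adj E))
    (hab : E a b) (hv : (a :: b :: l).getLast? = some v) (hnd : ¬ Desc E a v) :
    ∃ i w, ColliderAt E (a :: b :: l) i ∧ (a :: b :: l)[i]? = some w ∧ Desc E a w := by
  induction l generalizing a b with
  | nil =>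
    obtain rfl : b = v := by simpa using hv
    exact absurd (.single hab) hnd
  | cons c l ih =>
    have hch' := (List.isChain_cons_cons.mp hch).2
    rcases (List.isChain_cons_cons.mp hch').1 with hbc | hcb
    · obtain ⟨i, w, hc, hw, hbw⟩ :=
        ih hch' hbc (by simpa using hv) fun hbv => hnd (.head hab hbv)
      exact ⟨i + 1, w, colliderAt_cons a hc, by simpa using hw, .head hab hbw⟩
    · exact ⟨1, b, ⟨one_pos, a, b, c, rfl, rfl, rfl, hab, hcb⟩, rfl, .single hab⟩

theorem dSep_parents_of_not_desc (hD : Acyclic E) {u v : V} (hnadj : ¬ Adj E u v)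
    (hnd : ¬ Desc E u v) : DSep E {w | E w u} u v := by
  rintro p ⟨-, hch, hhd, hlast⟩
  obtain ⟨w, l, rfl⟩ : ∃ w l, p = u :: w :: l := by
    rcases p with _ | ⟨x, _ | ⟨w, l⟩⟩
    · simp at hhd
    · obtain ⟨rfl, rfl⟩ : x = u ∧ x = v := by simp_all
      exact absurd .refl hnd
    · exact ⟨w, l, by simp_all⟩
  rcases (List.isChain_cons_cons.mp hch).1 with huw | hwu
  · obtain ⟨i, x, hc, hx, hux⟩ := exists_colliderAt_desc hch huw hlast hnd
    exact .inr ⟨i, x, hc, hx, fun d hxd hdu => hD.not_edge_of_desc (hux.trans hxd) hdu⟩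
  · obtain ⟨c, l, rfl⟩ : ∃ c l', l = c :: l' := by
      refine List.exists_cons_of_ne_nil fun hl => hnadj ?_
      subst hl
      obtain rfl : w = v := by simpa using hlast
      exact .inr hwu
    refine .inl ⟨1, w, one_pos, by simp, rfl, ?_, hwu⟩
    rintro ⟨-, a, x, b, ha, hx, -, hax, -⟩
    cases ha; cases hx
    exact hD.not_edge_of_desc (.single hax) hwu

end

/-- Distinct non-adjacent nodes of a DAG are d-separated by the parents of one of them. -/
theorem nonadjacent_dsep_by_parents {V : Type*} (E : V → V → Prop) (hD : Acyclic E)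
    (u v : V) (huv : u ≠ v) (hnadj : ¬ Adj E u v) :
    DSep E {w | E w u} u v ∨ DSep E {w | E w v} u v := by
  by_cases hdesc : Desc E u v
  · have hvu : ¬ Desc E v u := fun hvu => huv (hD.desc_antisymm hdesc hvu)
    exact .inr (dSep_reverse (dSep_parents_of_not_desc hD (fun h => hnadj h.symm) hvu))
  · exact .inl (dSep_parents_of_not_desc hD hnadj hdesc)
end

section
/- Let D be a DAG consistent with a tiered ordering τ (every edge u → v satisfies τ(u) ≤ τ(v)), and let π be a path between nodes A and B that contains some node C with τ(C) > τ(A) and τ(C) > τ(B). Then π contains a collider at some node W with τ(W) > max(τ(A), τ(B)). -/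
/-! The nodes in a tier later than both endpoints form a set `S` closed under taking
children, and the path starts and ends outside `S`. Where the path first enters `S`, the
edge must point into `S`. Following forward edges keeps the path inside `S`, so before it
can leave `S` again it meets a backward edge, and the node there is a collider in `S`. -/

def HasColliderIn {V : Type*} (E : V → V → Prop) (S : Set V) (p : List V) : Prop :=
  ∃ i w, ColliderAt E p i ∧ p[i]? = some w ∧ w ∈ S

section

variable {V : Type*} {E : V → V → Prop} {S : Set V}

theorem HasColliderIn.cons {p : List V} (h : HasColliderIn E S p) (x : V) :
    HasColliderIn E S (x :: p) := by
  obtain ⟨i, w, ⟨hi, a, w', b, ha, hw', hb, haw, hbw⟩, hw, hwS⟩ := h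
  obtain ⟨j, rfl⟩ : ∃ j, i = j + 1 := ⟨i - 1, by omega⟩
  exact ⟨j + 2, w, ⟨by omega, a, w', b, ha, hw', hb, haw, hbw⟩, hw, hwS⟩

theorem hasColliderIn_cons_cons_cons {a w b : V} (l : List V) (haw : E a w) (hbw : E b w)
    (hw : w ∈ S) : HasColliderIn E S (a :: w :: b :: l) :=
  ⟨1, w, ⟨Nat.one_pos, a, w, b, rfl, rfl, rfl, haw, hbw⟩, rfl, hw⟩

variable (hS : ∀ u v, E u v → u ∈ S → v ∈ S)
include hS

theorem hasColliderIn_of_edge_into (a : V) {w : V} (l : List V)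
    (hchain : (a :: w :: l).IsChain (Adj E)) (haw : E a w) (hw : w ∈ S)
    (hlast : (w :: l).getLast (List.cons_ne_nil w l) ∉ S) :
    HasColliderIn E S (a :: w :: l) := by
  induction l generalizing a w with
  | nil => exact absurd hw hlast
  | cons b l ih =>
    rw [List.isChain_cons_cons, List.isChain_cons_cons] at hchain
    obtain ⟨-, hwb, hchain⟩ := hchain
    rcases hwb with hwb | hbw
    · exact (ih w (List.isChain_cons_cons.mpr ⟨Or.inl hwb, hchain⟩) hwb (hS w b hwb hw)
        (by simpa using hlast)).cons a
    · exact hasColliderIn_cons_cons_cons l haw hbw hw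

theorem hasColliderIn_of_mem {p : List V} (hchain : p.IsChain (Adj E))
    (hne : p ≠ []) (hhead : p.head hne ∉ S) (hlast : p.getLast hne ∉ S)
    {c : V} (hc : c ∈ p) (hcS : c ∈ S) : HasColliderIn E S p := by
  induction p with
  | nil => exact absurd rfl hne
  | cons a l ih =>
    rcases l with _ | ⟨b, l⟩
    · exact absurd (List.mem_singleton.mp hc ▸ hcS) hlast
    obtain ⟨hab, hchain'⟩ := List.isChain_cons_cons.mp hchain
    by_cases hb : b ∈ S
    · have hab : E a b := hab.resolve_right fun hba => hhead (hS b a hba hb)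
      exact hasColliderIn_of_edge_into hS a l hchain hab hb (by simpa using hlast)
    · have hcl : c ∈ b :: l :=
        (List.mem_cons.mp hc).resolve_left (by rintro rfl; exact hhead hcS)
      exact (ih hchain' (List.cons_ne_nil b l) hb (by simpa using hlast) hcl).cons a

end

theorem collider_in_later_tier_general {V : Type*} (E : V → V → Prop)
    (τ : V → ℕ) (hcons : ∀ u v, E u v → τ u ≤ τ v)
    (A B : V) (p : List V) (hp : IsPath E A B p)
    (C : V) (hCp : C ∈ p) (hCA : τ A < τ C) (hCB : τ B < τ C) :
    ∃ i w, ColliderAt E p i ∧ p[i]? = some w ∧ max (τ A) (τ B) < τ w := by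
  obtain ⟨-, hchain, hhead, hlast⟩ := hp
  have hne : p ≠ [] := List.ne_nil_of_mem hCp
  rw [List.head?_eq_some_head hne, Option.some_inj] at hhead
  rw [List.getLast?_eq_some_getLast hne, Option.some_inj] at hlast
  refine hasColliderIn_of_mem (S := {w | max (τ A) (τ B) < τ w})
    (fun u v huv hu => lt_of_lt_of_le hu (hcons u v huv)) hchain hne ?_ ?_ hCp (max_lt hCA hCB)
  · simp [hhead]
  · simp [hlast]

/-- On a path between  and  in a DAG consistent with τ, any node in a tier
strictly later than both endpoints forces a collider in a tier strictly later
than both endpoints. -/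
theorem collider_in_later_tier {V : Type*} (E : V → V → Prop) (hD : Acyclic E)
    (τ : V → ℕ) (hcons : ∀ u v, E u v → τ u ≤ τ v)
    (A B : V) (p : List V) (hp : IsPath E A B p)
    (C : V) (hCp : C ∈ p) (hCA : τ A < τ C) (hCB : τ B < τ C) :
    ∃ i w, ColliderAt E p i ∧ p[i]? = some w ∧ max (τ A) (τ B) < τ w :=
  collider_in_later_tier_general E τ hcons A B p hp C hCp hCA hCB
end

section
/- (Soundness of Meek's rule 3) Let D be a DAG containing edges C → B and D → B, where C and D are non-adjacent, and suppose A is adjacent to each of B, C, D, and that in D it is not the case that both C → A and D → A. Then the edge between A and B is oriented as A → B in D. -/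
/-- Soundness of Meek's rule 3. -/
theorem meek_rule_3 {V : Type*} (E : V → V → Prop) (hD : Acyclic E)
    (A B C D : V) (hCB : E C B) (hDB : E D B) (hCD : ¬ Adj E C D)
    (hAB : Adj E A B) (hAC : Adj E A C) (hAD : Adj E A D)
    (hnv : ¬ (E C A ∧ E D A)) :
    E A B := by
  rcases hAB with h | hBA
  · exact h
  exfalso
  have hcyc : ∀ X : V, E A X → E X B → False := fun X hAX hXB =>
    hD B ((Relation.TransGen.single hBA).tail hAX |>.tail hXB)
  rcases hAC with hACd | hCA
  · exact hcyc C hACd hCB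
  rcases hAD with hADd | hDA
  · exact hcyc D hADd hDB
  exact hnv ⟨hCA, hDA⟩
end

section
/- (Soundness of Meek's rule 4) Let D be a DAG containing edges C → D and D → B, with B and C non-adjacent, and suppose A is adjacent to each of B, C, D, with the triple ⟨C, A, B⟩ not forming a v-structure at A (i.e., not both C → A and B → A). Then the edge between A and B is oriented as A → B in D. -/
/-- Soundness of Meek's rule 4. -/
theorem meek_rule_4 {V : Type*} (E : V → V → Prop) (hD : Acyclic E)
    (A B C D : V) (hCD : E C D) (hDB : E D B) (hBC : ¬ Adj E B C)
    (hAB : Adj E A B) (hAC : Adj E A C) (hAD : Adj E A D)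
    (hnv : ¬ (E C A ∧ E B A)) :
    E A B := by
  rcases hAB with h | hBA
  · exact h
  · have hnCA : ¬ E C A := fun h => hnv ⟨h, hBA⟩
    have hAC' : E A C := hAC.resolve_right hnCA
    exact absurd ((Relation.TransGen.single hAC').tail hCD |>.tail hDB |>.tail hBA) (hD A)
end

section
/- Let D1 and D2 be DAGs on the same node set inducing the same d-separation relations (i.e., for all nodes u, v and sets S, S d-separates u and v in D1 iff it does so in D2). Then D1 and D2 have the same skeleton: u and v are adjacent in D1 iff they are adjacent in D2. -/
section

variable {V : Type*} {E : V → V → Prop} {u v : V}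

lemma Acyclic.not_adj_self (hac : Acyclic E) (u : V) : ¬ Adj E u u := by
  rintro (h | h) <;> exact hac u (.single h)

lemma Acyclic.eq_of_desc_of_desc (hac : Acyclic E) (huv : Desc E u v) (hvu : Desc E v u) :
    u = v := by
  rcases huv.cases_head with h | ⟨w, huw, hwv⟩
  · exact h
  · exact (hac u (.head' huw (hwv.trans hvu))).elim

lemma not_dsep_of_adj (huv : u ≠ v) (hadj : Adj E u v) (S : Set V) : ¬ DSep E S u v := by
  intro hd
  rcases hd [u, v] ⟨by simp [huv], List.isChain_pair.mpr hadj, rfl, rfl⟩ with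
    ⟨i, w, hi, hlen, -⟩ | ⟨i, w, ⟨hi, a, w', b, -, -, hb, -⟩, -⟩
  · simp at hlen; omega
  · have := (List.getElem?_eq_some_iff.mp hb).1
    simp at this; omega

lemma ColliderAt.cons {p : List V} {j : ℕ} (x : V) (hj : ColliderAt E p j) :
    ColliderAt E (x :: p) (j + 1) := by
  obtain ⟨hj, a, w, b, ha, hw, hb, haw, hbw⟩ := hj
  obtain ⟨k, rfl⟩ : ∃ k, j = k + 1 := ⟨j - 1, by omega⟩
  exact ⟨by omega, a, w, b, by simpa using ha, by simpa using hw, by simpa using hb, haw, hbw⟩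

/-- Follow the path forward from `a → b` as long as its edges point forward: since the far end
is not a descendant of `a`, some edge points backward, and it meets the forward run in a
collider. -/
lemma exists_desc_collider {a b v : V} {rest : List V}
    (hch : (a :: b :: rest).IsChain (Adj E)) (hab : E a b)
    (hlast : (a :: b :: rest).getLast? = some v) (hv : ¬ Desc E a v) :
    ∃ j w, ColliderAt E (a :: b :: rest) j ∧ (a :: b :: rest)[j]? = some w ∧ Desc E a w := by
  induction rest generalizing a b with
  | nil =>
    obtain rfl : b = v := by simpa using hlast
    exact absurd (.single hab) hv
  | cons c rest ih =>
    have hch' := (List.isChain_cons_cons.mp hch).2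
    have hbc := (List.isChain_cons_cons.mp hch').1
    by_cases hcb : E c b
    · exact ⟨1, b, ⟨one_pos, a, b, c, rfl, rfl, rfl, hab, hcb⟩, rfl, .single hab⟩
    · replace hbc : E b c := hbc.resolve_right hcb
      have hbv : ¬ Desc E b v := fun hbv => hv (.head hab hbv)
      obtain ⟨j, w, hcol, hw, hbw⟩ := ih hch' hbc (by simpa using hlast) hbv
      exact ⟨j + 1, w, hcol.cons a, by simpa using hw, .head hab hbw⟩

/-- A path from `u` either leaves `u` through a parent of `u`, a non-collider, or runs forward
into a collider whose descendants are descendants of `u`, hence not parents of `u`. -/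
lemma dsep_parents_of_not_desc (hac : Acyclic E) (hadj : ¬ Adj E u v) (hdesc : ¬ Desc E u v) :
    DSep E {w | E w u} u v := by
  rintro p ⟨-, hch, hhead, hlast⟩
  obtain ⟨_ | ⟨w, rest⟩, rfl⟩ : ∃ t, p = u :: t := by
    cases p with
    | nil => simp at hhead
    | cons x t => exact ⟨t, by simpa using hhead⟩
  · obtain rfl : u = v := by simpa using hlast
    exact absurd .refl hdesc
  rcases List.isChain_cons_cons.mp hch |>.1 with huw | hwu
  · obtain ⟨j, x, hcol, hx, hux⟩ := exists_desc_collider hch huw hlast hdesc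
    exact Or.inr ⟨j, x, hcol, hx, fun d hxd hdu => hac u (.tail' (hux.trans hxd) hdu)⟩
  · obtain ⟨c, rest, rfl⟩ : ∃ c rest', rest = c :: rest' := by
      cases rest with
      | nil =>
        obtain rfl : w = v := by simpa using hlast
        exact absurd (Or.inr hwu) hadj
      | cons c rest' => exact ⟨c, rest', rfl⟩
    refine Or.inl ⟨1, w, one_pos, by simp, rfl, ?_, hwu⟩
    rintro ⟨-, a, w', b, ha, hw', -, haw, -⟩
    simp only [Nat.sub_self, List.getElem?_cons_zero, List.getElem?_cons_succ,
      Option.some.injEq] at ha hw'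
    subst ha hw'
    exact hac _ (.head haw (.single hwu))

/-- Both orders are quantified so that the symmetry of d-separation is never needed. -/
lemma adj_iff_forall_not_dsep (hac : Acyclic E) (huv : u ≠ v) :
    Adj E u v ↔ ∀ S, ¬ DSep E S u v ∧ ¬ DSep E S v u := by
  refine ⟨fun hadj S => ⟨not_dsep_of_adj huv hadj S, not_dsep_of_adj huv.symm hadj.symm S⟩,
    fun hsep => ?_⟩
  by_contra hadj
  by_cases hdesc : Desc E u v
  · have hvu : ¬ Desc E v u := fun hvu => huv (hac.eq_of_desc_of_desc hdesc hvu)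
    exact (hsep _).2 (dsep_parents_of_not_desc hac (fun h => hadj h.symm) hvu)
  · exact (hsep _).1 (dsep_parents_of_not_desc hac hadj hdesc)

end

theorem same_dsep_same_skeleton_general {V : Type*}
    (E₁ E₂ : V → V → Prop) (h₁ : Acyclic E₁) (h₂ : Acyclic E₂)
    (h : ∀ (S : Set V) (u v : V), DSep E₁ S u v ↔ DSep E₂ S u v) :
    ∀ u v : V, Adj E₁ u v ↔ Adj E₂ u v := by
  intro u v
  rcases eq_or_ne u v with rfl | huv
  · exact iff_of_false (h₁.not_adj_self u) (h₂.not_adj_self u)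
  · simp only [adj_iff_forall_not_dsep h₁ huv, adj_iff_forall_not_dsep h₂ huv, h]

/-- Two DAGs inducing the same d-separation relations have the same skeleton. -/
theorem same_dsep_same_skeleton {V : Type*} [Fintype V]
    (E₁ E₂ : V → V → Prop) (h₁ : Acyclic E₁) (h₂ : Acyclic E₂)
    (h : ∀ (S : Set V) (u v : V), DSep E₁ S u v ↔ DSep E₂ S u v) :
    ∀ u v : V, Adj E₁ u v ↔ Adj E₂ u v :=
  same_dsep_same_skeleton_general E₁ E₂ h₁ h₂ h
end
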